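/- Let X be a ℤ₂⁴-equivariant triangulation of the sphere S³ in ℝ⁴ with exactly 8 vertices. Then there exist a permutation of the four coordinates of ℝ⁴ and nonzero real numbers a, b, c, d such that, after applying the coordinate permutation to all vertices, the vertex set V(X) is one of the following (each listed set containing all sign combinations): (I) {(±a, ±b, 0, 0)} ∪ {(0, 0, ±c, ±d)}; (II) {(±a, ±b, 0, 0)} ∪ {(0, 0, ±c, 0)} ∪ {(0, 0, 0, ±d)}; (III) {(±a, 0, 0, 0)} ∪ {(0, ±b, 0, 0)} ∪ {(0, 0, ±c, 0)} ∪ {(0, 0, 0, ±d)}. -/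

import Mathlib

open Set

noncomputable section

/-- The sign-change map `x ↦ (ε₁x₁, …, εₙxₙ)` on `EuclideanSpace ℝ (Fin n)`. -/
def signMap {n : ℕ} (ε : Fin n → ℝ) (x : EuclideanSpace ℝ (Fin n)) :
    EuclideanSpace ℝ (Fin n) :=
  WithLp.toLp 2 (fun i => ε i * x i)

/-- `X` is a `ℤ₂ⁿ`-equivariant triangulation of the unit sphere `S^{n-1} ⊆ ℝⁿ`. -/
structure IsEquivSphereTriangulation (n : ℕ)
    (X : Geometry.SimplicialComplex ℝ (EuclideanSpace ℝ (Fin n))) : Prop where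
  finite : X.faces.Finite
  zero_not_mem : (0 : EuclideanSpace ℝ (Fin n)) ∉ X.space
  radial_homeo : ∃ φ : X.space ≃ₜ (Metric.sphere (0 : EuclideanSpace ℝ (Fin n)) 1),
      ∀ x : X.space, (φ x : EuclideanSpace ℝ (Fin n)) =
        ‖(x : EuclideanSpace ℝ (Fin n))‖⁻¹ • (x : EuclideanSpace ℝ (Fin n))
  equivariant : ∀ ε : Fin n → ℝ, (∀ i, ε i = 1 ∨ ε i = -1) →
      ∀ s ∈ X.faces, ∃ t ∈ X.faces,
        (t : Set (EuclideanSpace ℝ (Fin n))) = signMap ε '' (s : Set (EuclideanSpace ℝ (Fin n)))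

/-- The point `(a, b, c, d)` of `ℝ⁴`. -/
def v4 (a b c d : ℝ) : EuclideanSpace ℝ (Fin 4) := WithLp.toLp 2 ![a, b, c, d]

/-- The vertex configuration `(I)`: `(±a, ±b, 0, 0)` and `(0, 0, ±c, ±d)`. -/
def setI (a b c d : ℝ) : Set (EuclideanSpace ℝ (Fin 4)) :=
  {v4 a b 0 0, v4 a (-b) 0 0, v4 (-a) b 0 0, v4 (-a) (-b) 0 0,
    v4 0 0 c d, v4 0 0 c (-d), v4 0 0 (-c) d, v4 0 0 (-c) (-d)}

/-- The vertex configuration `(II)`: `(±a, ±b, 0, 0)`, `(0, 0, ±c, 0)` and `(0, 0, 0, ±d)`. -/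
def setII (a b c d : ℝ) : Set (EuclideanSpace ℝ (Fin 4)) :=
  {v4 a b 0 0, v4 a (-b) 0 0, v4 (-a) b 0 0, v4 (-a) (-b) 0 0,
    v4 0 0 c 0, v4 0 0 (-c) 0, v4 0 0 0 d, v4 0 0 0 (-d)}

/-- The vertex configuration `(III)`: `(±a, 0, 0, 0)`, `(0, ±b, 0, 0)`, `(0, 0, ±c, 0)` and
`(0, 0, 0, ±d)`. -/
def setIII (a b c d : ℝ) : Set (EuclideanSpace ℝ (Fin 4)) :=
  {v4 a 0 0 0, v4 (-a) 0 0 0, v4 0 b 0 0, v4 0 (-b) 0 0,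
    v4 0 0 c 0, v4 0 0 (-c) 0, v4 0 0 0 d, v4 0 0 0 (-d)}


/-! The sign changes act on the vertex set `V`; the orbit of `v` is `{x | |x| = |v|}`, of size
`2 ^ k` where `k` is the number of nonzero coordinates of `v`. Every coordinate is nonzero at some
vertex, since otherwise `|X|` would lie in a coordinate hyperplane and could not project radially
onto the sphere. So `8 = ∑ 2 ^ kₒ` over the orbits `o`, while their supports cover the four
coordinates, whence `∑ kₒ ≥ 4`. As `2 k ≤ 2 ^ k`, with equality only for `k = 1, 2`, the supports
have size `1` or `2` and partition the coordinates; the partition types `2 + 2`, `2 + 1 + 1` and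
`1 + 1 + 1 + 1` give (I), (II) and (III). -/

open scoped Finset

namespace Geometry.SimplicialComplex

variable {𝕜 E : Type*} [Ring 𝕜] [PartialOrder 𝕜] [AddCommGroup E] [Module 𝕜 E]

theorem space_subset_convexHull_vertices (K : SimplicialComplex 𝕜 E) :
    K.space ⊆ convexHull 𝕜 K.vertices := by
  intro x hx
  obtain ⟨s, hs, hxs⟩ := mem_space_iff.mp hx
  exact convexHull_mono (fun (y : E) hy => down_closed hs (Finset.singleton_subset_iff.2 hy)
    (Finset.singleton_nonempty y)) hxs

end Geometry.SimplicialComplex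

section SignChanges

variable {n : ℕ}

def IsSignInvariant (V : Set (EuclideanSpace ℝ (Fin n))) : Prop :=
  ∀ ε : Fin n → ℝ, (∀ i, ε i = 1 ∨ ε i = -1) → ∀ v ∈ V, signMap ε v ∈ V

def coordSupport (a : Fin n → ℝ) : Finset (Fin n) := {i | a i ≠ 0}

theorem mem_coordSupport {a : Fin n → ℝ} {i : Fin n} : i ∈ coordSupport a ↔ a i ≠ 0 := by
  simp [coordSupport]

theorem apply_eq_zero_of_notMem_coordSupport {a : Fin n → ℝ} {i : Fin n}
    (h : i ∉ coordSupport a) : a i = 0 := by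
  simpa [mem_coordSupport] using h

def signVariants (a : Fin n → ℝ) : Finset (EuclideanSpace ℝ (Fin n)) :=
  (Fintype.piFinset fun i => {a i, -a i}).image (WithLp.toLp 2)

theorem mem_signVariants {a : Fin n → ℝ} {x : EuclideanSpace ℝ (Fin n)} :
    x ∈ signVariants a ↔ |x.ofLp| = |a| := by
  simp only [signVariants, Finset.mem_image, Fintype.mem_piFinset, Finset.mem_insert,
    Finset.mem_singleton, funext_iff, Pi.abs_apply, abs_eq_abs]
  exact ⟨fun ⟨b, hb, hbx⟩ => hbx ▸ hb, fun h => ⟨x.ofLp, h, rfl⟩⟩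

theorem card_signVariants (a : Fin n → ℝ) : #(signVariants a) = 2 ^ #(coordSupport a) := by
  rw [signVariants, Finset.card_image_of_injective _ (WithLp.toLp_injective 2),
    Fintype.card_piFinset]
  calc ∏ i, #{a i, -a i} = ∏ i, if a i ≠ 0 then 2 else 1 := by
        refine Finset.prod_congr rfl fun i _ => ?_
        split_ifs with h
        · exact Finset.card_pair (by rwa [Ne, CharZero.eq_neg_self_iff])
        · simp [not_not.mp h]
    _ = 2 ^ #(coordSupport a) := by
        rw [Finset.prod_ite, Finset.prod_const_one, mul_one, Finset.prod_const]; rfl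

namespace IsSignInvariant

variable {V : Set (EuclideanSpace ℝ (Fin n))}

theorem mem_of_abs_eq (hV : IsSignInvariant V) {v x : EuclideanSpace ℝ (Fin n)} (hv : v ∈ V)
    (h : |x.ofLp| = |v.ofLp|) : x ∈ V := by
  convert hV (fun i => if x i = v i then 1 else -1) (fun i => by split_ifs <;> simp) v hv
  ext i
  have := abs_eq_abs.mp (congrFun h i)
  simp only [signMap, ite_mul, one_mul, neg_mul]
  split_ifs <;> grind

theorem eq_setOf_abs_mem (hV : IsSignInvariant V) : V = {x | |x.ofLp| ∈ (|·.ofLp|) '' V} :=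
  Set.ext fun _ => ⟨fun hx => ⟨_, hx, rfl⟩, fun ⟨_, hv, h⟩ => hV.mem_of_abs_eq hv h.symm⟩

theorem card_eq_sum {V : Finset (EuclideanSpace ℝ (Fin n))}
    (hV : IsSignInvariant (V : Set (EuclideanSpace ℝ (Fin n)))) :
    #V = ∑ a ∈ V.image (|·.ofLp|), 2 ^ #(coordSupport a) := by
  rw [Finset.card_eq_sum_card_image (|·.ofLp|)]
  refine Finset.sum_congr rfl fun a ha => ?_
  obtain ⟨v, hv, rfl⟩ := Finset.mem_image.mp ha
  rw [← card_signVariants]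
  congr 1
  ext x
  rw [Finset.mem_filter, mem_signVariants, abs_abs]
  exact ⟨And.right, fun h => ⟨hV.mem_of_abs_eq hv h, h⟩⟩

end IsSignInvariant

theorem image_permute_setOf_abs_mem (σ : Equiv.Perm (Fin n)) (𝒜 : Set (Fin n → ℝ)) :
    (fun x : EuclideanSpace ℝ (Fin n) =>
        (WithLp.toLp 2 (fun i => x (σ i)) : EuclideanSpace ℝ (Fin n))) '' {x | |x.ofLp| ∈ 𝒜} =
      {y | ∃ a ∈ 𝒜, |y.ofLp| = a ∘ σ} := by
  ext y
  constructor
  · rintro ⟨x, hx, rfl⟩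
    exact ⟨_, hx, rfl⟩
  · rintro ⟨a, ha, hy⟩
    refine ⟨WithLp.toLp 2 fun j => y (σ.symm j), show |_| ∈ 𝒜 from ?_, by simp⟩
    convert ha using 1
    ext j
    simpa using congrFun hy (σ.symm j)

end SignChanges

namespace IsEquivSphereTriangulation

variable {n : ℕ} {X : Geometry.SimplicialComplex ℝ (EuclideanSpace ℝ (Fin n))}

theorem isSignInvariant_vertices (hX : IsEquivSphereTriangulation n X) :
    IsSignInvariant X.vertices := by
  intro ε hε v hv
  obtain ⟨t, ht, hteq⟩ := hX.equivariant ε hε {v} hv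
  rw [Finset.coe_singleton, Set.image_singleton, Finset.coe_eq_singleton] at hteq
  rwa [hteq] at ht

theorem exists_vertex_apply_ne_zero (hX : IsEquivSphereTriangulation n X) (i : Fin n) :
    ∃ v ∈ X.vertices, v i ≠ 0 := by
  by_contra! h
  have hspace : X.space ⊆ {x | x i = 0} := X.space_subset_convexHull_vertices.trans <|
    convexHull_min h <| convex_hyperplane (EuclideanSpace.proj i).toLinearMap.isLinear 0
  obtain ⟨φ, hφ⟩ := hX.radial_homeo
  have he : EuclideanSpace.single i (1 : ℝ) ∈ Metric.sphere 0 1 := by simp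
  have hx : (φ.symm ⟨_, he⟩ : EuclideanSpace ℝ (Fin n)) i = 0 := hspace (φ.symm ⟨_, he⟩).2
  have hi := congrArg (· i) (hφ (φ.symm ⟨_, he⟩))
  simp [hx] at hi

end IsEquivSphereTriangulation

section Counting

theorem two_mul_lt_two_pow {k : ℕ} (hk : 3 ≤ k) : 2 * k < 2 ^ k := by
  induction k, hk using Nat.le_induction with
  | base => norm_num
  | succ k hk ih => rw [pow_succ]; have := Nat.one_lt_two_pow (by omega : k ≠ 0); omega

theorem two_mul_le_two_pow (k : ℕ) : 2 * k ≤ 2 ^ k := by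
  rcases lt_or_ge k 3 with hk | hk
  · interval_cases k <;> norm_num
  · exact (two_mul_lt_two_pow hk).le

theorem two_mul_eq_two_pow_iff {k : ℕ} : 2 * k = 2 ^ k ↔ k = 1 ∨ k = 2 := by
  refine ⟨fun h => ?_, by rintro (rfl | rfl) <;> rfl⟩
  rcases lt_or_ge k 3 with hk | hk
  · interval_cases k <;> simp_all
  · exact absurd h (two_mul_lt_two_pow hk).ne

theorem sum_card_eq_of_sum_two_pow_eq {ι α : Type*} [Fintype α] [DecidableEq α] {A : Finset ι}
    {S : ι → Finset α} (hcover : ∀ x, ∃ a ∈ A, x ∈ S a)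
    (hsum : ∑ a ∈ A, 2 ^ #(S a) = 2 * Fintype.card α) :
    ∑ a ∈ A, #(S a) = Fintype.card α ∧ ∀ a ∈ A, #(S a) = 1 ∨ #(S a) = 2 := by
  have hle : ∀ a ∈ A, 2 * #(S a) ≤ 2 ^ #(S a) := fun a _ => two_mul_le_two_pow _
  have hcard : Fintype.card α ≤ ∑ a ∈ A, #(S a) :=
    calc Fintype.card α = #(A.biUnion S) := by
          rw [← Finset.card_univ,
            Finset.eq_univ_of_forall fun x => Finset.mem_biUnion.mpr (hcover x)]
      _ ≤ ∑ a ∈ A, #(S a) := Finset.card_biUnion_le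
  have heq : ∑ a ∈ A, 2 * #(S a) = ∑ a ∈ A, 2 ^ #(S a) :=
    le_antisymm (Finset.sum_le_sum hle) (by rw [hsum, ← Finset.mul_sum]; omega)
  refine ⟨by rw [← Finset.mul_sum, hsum] at heq; omega, fun a ha => ?_⟩
  exact two_mul_eq_two_pow_iff.mp ((Finset.sum_eq_sum_iff_of_le hle).mp heq a ha)

theorem exists_perm_eq_of_forall {p q r s : Fin 4} (h : ∀ i, i = p ∨ i = q ∨ i = r ∨ i = s) :
    ∃ σ : Equiv.Perm (Fin 4), σ 0 = p ∧ σ 1 = q ∧ σ 2 = r ∧ σ 3 = s := by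
  have hsurj : Function.Surjective ![p, q, r, s] := fun i => by
    rcases h i with rfl | rfl | rfl | rfl
    exacts [⟨0, rfl⟩, ⟨1, rfl⟩, ⟨2, rfl⟩, ⟨3, rfl⟩]
  exact ⟨Equiv.ofBijective _ (Finite.surjective_iff_bijective.mp hsurj), rfl, rfl, rfl, rfl⟩

theorem exists_perm_of_two_blocks {ι : Type*} [DecidableEq ι] {A : Finset ι}
    {S : ι → Finset (Fin 4)} (hcover : ∀ i, ∃ a ∈ A, i ∈ S a) (hsum : ∑ a ∈ A, #(S a) = 4)
    (hsize : ∀ a ∈ A, #(S a) = 1 ∨ #(S a) = 2) (hA : #A = 2) :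
    ∃ (σ : Equiv.Perm (Fin 4)) (α β : ι), A = {α, β} ∧ S α = {σ 0, σ 1} ∧ S β = {σ 2, σ 3} := by
  obtain ⟨α, β, hαβ, rfl⟩ := Finset.card_eq_two.mp hA
  rw [Finset.sum_pair hαβ] at hsum
  have hα := hsize α (by simp)
  have hβ := hsize β (by simp)
  obtain ⟨p, q, -, hSα⟩ := Finset.card_eq_two.mp (by omega : #(S α) = 2)
  obtain ⟨r, s, -, hSβ⟩ := Finset.card_eq_two.mp (by omega : #(S β) = 2)
  obtain ⟨σ, rfl, rfl, rfl, rfl⟩ := exists_perm_eq_of_forall (p := p) (q := q) (r := r) (s := s)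
    (by simpa [hSα, hSβ, or_assoc] using hcover)
  exact ⟨σ, α, β, rfl, hSα, hSβ⟩

theorem exists_perm_of_three_blocks {ι : Type*} [DecidableEq ι] {A : Finset ι}
    {S : ι → Finset (Fin 4)} (hcover : ∀ i, ∃ a ∈ A, i ∈ S a) (hsum : ∑ a ∈ A, #(S a) = 4)
    (hsize : ∀ a ∈ A, #(S a) = 1 ∨ #(S a) = 2) (hA : #A = 3) :
    ∃ (σ : Equiv.Perm (Fin 4)) (α β γ : ι),
      A = {α, β, γ} ∧ S α = {σ 0, σ 1} ∧ S β = {σ 2} ∧ S γ = {σ 3} := by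
  obtain ⟨α, hα, hα2⟩ : ∃ α ∈ A, #(S α) = 2 := by
    by_contra! h
    have : ∑ a ∈ A, #(S a) = ∑ a ∈ A, 1 :=
      Finset.sum_congr rfl fun a ha => (hsize a ha).resolve_right (h a ha)
    simp_all
  obtain ⟨β, γ, hβγ, hA'⟩ := Finset.card_eq_two.mp
    (by rw [Finset.card_erase_of_mem hα]; omega : #(A.erase α) = 2)
  have hA : A = {α, β, γ} := by rw [← Finset.insert_erase hα, hA']
  rw [← Finset.add_sum_erase _ _ hα, hA', Finset.sum_pair hβγ] at hsum
  have hβ := hsize β (by simp [hA])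
  have hγ := hsize γ (by simp [hA])
  obtain ⟨p, q, -, hSα⟩ := Finset.card_eq_two.mp hα2
  obtain ⟨r, hSβ⟩ := Finset.card_eq_one.mp (by omega : #(S β) = 1)
  obtain ⟨s, hSγ⟩ := Finset.card_eq_one.mp (by omega : #(S γ) = 1)
  subst hA
  obtain ⟨σ, rfl, rfl, rfl, rfl⟩ := exists_perm_eq_of_forall (p := p) (q := q) (r := r) (s := s)
    (by simpa [hSα, hSβ, hSγ, or_assoc] using hcover)
  exact ⟨σ, α, β, γ, rfl, hSα, hSβ, hSγ⟩

theorem exists_perm_of_four_blocks {ι : Type*} [DecidableEq ι] {A : Finset ι}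
    {S : ι → Finset (Fin 4)} (hcover : ∀ i, ∃ a ∈ A, i ∈ S a) (hsum : ∑ a ∈ A, #(S a) = 4)
    (hsize : ∀ a ∈ A, #(S a) = 1 ∨ #(S a) = 2) (hA : #A = 4) :
    ∃ (σ : Equiv.Perm (Fin 4)) (α β γ δ : ι),
      A = {α, β, γ, δ} ∧ S α = {σ 0} ∧ S β = {σ 1} ∧ S γ = {σ 2} ∧ S δ = {σ 3} := by
  have h1 : ∀ a ∈ A, 1 = #(S a) :=
    (Finset.sum_eq_sum_iff_of_le fun a ha => by grind).mp <| by simp [hsum, hA]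
  obtain ⟨α, β, γ, δ, -, -, -, -, -, -, rfl⟩ := Finset.card_eq_four.mp hA
  obtain ⟨p, hSα⟩ := Finset.card_eq_one.mp (h1 α (by simp)).symm
  obtain ⟨q, hSβ⟩ := Finset.card_eq_one.mp (h1 β (by simp)).symm
  obtain ⟨r, hSγ⟩ := Finset.card_eq_one.mp (h1 γ (by simp)).symm
  obtain ⟨s, hSδ⟩ := Finset.card_eq_one.mp (h1 δ (by simp)).symm
  obtain ⟨σ, rfl, rfl, rfl, rfl⟩ := exists_perm_eq_of_forall (p := p) (q := q) (r := r) (s := s)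
    (by simpa [hSα, hSβ, hSγ, hSδ, or_assoc] using hcover)
  exact ⟨σ, α, β, γ, δ, rfl, hSα, hSβ, hSγ, hSδ⟩

theorem exists_perm_of_blocks {ι : Type*} [DecidableEq ι] {A : Finset ι} {S : ι → Finset (Fin 4)}
    (hcover : ∀ i, ∃ a ∈ A, i ∈ S a) (hsum : ∑ a ∈ A, #(S a) = 4)
    (hsize : ∀ a ∈ A, #(S a) = 1 ∨ #(S a) = 2) :
    ∃ σ : Equiv.Perm (Fin 4),
      (∃ α β, A = {α, β} ∧ S α = {σ 0, σ 1} ∧ S β = {σ 2, σ 3}) ∨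
      (∃ α β γ, A = {α, β, γ} ∧ S α = {σ 0, σ 1} ∧ S β = {σ 2} ∧ S γ = {σ 3}) ∨
      (∃ α β γ δ, A = {α, β, γ, δ} ∧ S α = {σ 0} ∧ S β = {σ 1} ∧ S γ = {σ 2} ∧ S δ = {σ 3}) := by
  have hle : #A ≤ 4 := by
    simpa [← hsum] using Finset.card_nsmul_le_sum A (fun a => #(S a)) 1 (fun a ha => by grind)
  have hge : 4 ≤ 2 * #A := by
    simpa [← hsum, mul_comm] using
      Finset.sum_le_card_nsmul A (fun a => #(S a)) 2 (fun a ha => by grind)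
  rcases (by omega : #A = 2 ∨ #A = 3 ∨ #A = 4) with hA | hA | hA
  · obtain ⟨σ, h⟩ := exists_perm_of_two_blocks hcover hsum hsize hA
    exact ⟨σ, Or.inl h⟩
  · obtain ⟨σ, h⟩ := exists_perm_of_three_blocks hcover hsum hsize hA
    exact ⟨σ, Or.inr (Or.inl h)⟩
  · obtain ⟨σ, h⟩ := exists_perm_of_four_blocks hcover hsum hsize hA
    exact ⟨σ, Or.inr (Or.inr h)⟩

end Counting

section Configurations

theorem eq_v4_iff {a b c d : ℝ} {y : EuclideanSpace ℝ (Fin 4)} :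
    y = v4 a b c d ↔ y 0 = a ∧ y 1 = b ∧ y 2 = c ∧ y 3 = d := by
  simp [v4, WithLp.ext_iff, funext_iff, Fin.forall_fin_succ]

theorem abs_ofLp_eq_abs_iff {a b c d : ℝ} {y : EuclideanSpace ℝ (Fin 4)} :
    |y.ofLp| = |![a, b, c, d]| ↔ (y 0 = a ∨ y 0 = -a) ∧ (y 1 = b ∨ y 1 = -b) ∧
      (y 2 = c ∨ y 2 = -c) ∧ (y 3 = d ∨ y 3 = -d) := by
  simp [funext_iff, Fin.forall_fin_succ, abs_eq_abs]

theorem mem_setI {a b c d : ℝ} {y : EuclideanSpace ℝ (Fin 4)} :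
    y ∈ setI a b c d ↔ |y.ofLp| = |![a, b, 0, 0]| ∨ |y.ofLp| = |![0, 0, c, d]| := by
  simp only [setI, Set.mem_insert_iff, Set.mem_singleton_iff, eq_v4_iff, abs_ofLp_eq_abs_iff,
    neg_zero, or_self, or_and_right]
  simp only [and_or_left, or_assoc]

theorem mem_setII {a b c d : ℝ} {y : EuclideanSpace ℝ (Fin 4)} :
    y ∈ setII a b c d ↔
      |y.ofLp| = |![a, b, 0, 0]| ∨ |y.ofLp| = |![0, 0, c, 0]| ∨ |y.ofLp| = |![0, 0, 0, d]| := by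
  simp only [setII, Set.mem_insert_iff, Set.mem_singleton_iff, eq_v4_iff, abs_ofLp_eq_abs_iff,
    neg_zero, or_self, or_and_right]
  simp only [and_or_left, or_assoc]

theorem mem_setIII {a b c d : ℝ} {y : EuclideanSpace ℝ (Fin 4)} :
    y ∈ setIII a b c d ↔ |y.ofLp| = |![a, 0, 0, 0]| ∨ |y.ofLp| = |![0, b, 0, 0]| ∨
      |y.ofLp| = |![0, 0, c, 0]| ∨ |y.ofLp| = |![0, 0, 0, d]| := by
  simp only [setIII, Set.mem_insert_iff, Set.mem_singleton_iff, eq_v4_iff, abs_ofLp_eq_abs_iff,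
    neg_zero, or_self, or_and_right]
  simp only [and_or_left, or_assoc]

theorem comp_perm_eq_abs {a : Fin 4 → ℝ} (ha : 0 ≤ a) (σ : Equiv.Perm (Fin 4)) :
    a ∘ σ = |![a (σ 0), a (σ 1), a (σ 2), a (σ 3)]| := by
  ext i
  fin_cases i <;> simp [abs_of_nonneg (ha _)]

theorem exists_eq_setI_of_coordSupport_eq {σ : Equiv.Perm (Fin 4)} {α β : Fin 4 → ℝ}
    (hα : 0 ≤ α) (hβ : 0 ≤ β) (hSα : coordSupport α = {σ 0, σ 1}) (hSβ : coordSupport β = {σ 2, σ 3}) :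
    ∃ a b c d, a ≠ 0 ∧ b ≠ 0 ∧ c ≠ 0 ∧ d ≠ 0 ∧
      {y : EuclideanSpace ℝ (Fin 4) | ∃ a ∈ ({α, β} : Set (Fin 4 → ℝ)), |y.ofLp| = a ∘ σ} =
        setI a b c d := by
  refine ⟨α (σ 0), α (σ 1), β (σ 2), β (σ 3), ?_, ?_, ?_, ?_, ?_⟩
  any_goals exact mem_coordSupport.mp (by simp [hSα, hSβ])
  ext y
  simp [mem_setI, comp_perm_eq_abs hα, comp_perm_eq_abs hβ, apply_eq_zero_of_notMem_coordSupport,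
    hSα, hSβ]

theorem exists_eq_setII_of_coordSupport_eq {σ : Equiv.Perm (Fin 4)} {α β γ : Fin 4 → ℝ} (hα : 0 ≤ α)
    (hβ : 0 ≤ β) (hγ : 0 ≤ γ) (hSα : coordSupport α = {σ 0, σ 1}) (hSβ : coordSupport β = {σ 2})
    (hSγ : coordSupport γ = {σ 3}) :
    ∃ a b c d, a ≠ 0 ∧ b ≠ 0 ∧ c ≠ 0 ∧ d ≠ 0 ∧
      {y : EuclideanSpace ℝ (Fin 4) | ∃ a ∈ ({α, β, γ} : Set (Fin 4 → ℝ)), |y.ofLp| = a ∘ σ} =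
        setII a b c d := by
  refine ⟨α (σ 0), α (σ 1), β (σ 2), γ (σ 3), ?_, ?_, ?_, ?_, ?_⟩
  any_goals exact mem_coordSupport.mp (by simp [hSα, hSβ, hSγ])
  ext y
  simp [mem_setII, comp_perm_eq_abs hα, comp_perm_eq_abs hβ, comp_perm_eq_abs hγ,
    apply_eq_zero_of_notMem_coordSupport, hSα, hSβ, hSγ]

theorem exists_eq_setIII_of_coordSupport_eq {σ : Equiv.Perm (Fin 4)} {α β γ δ : Fin 4 → ℝ}
    (hα : 0 ≤ α) (hβ : 0 ≤ β) (hγ : 0 ≤ γ) (hδ : 0 ≤ δ) (hSα : coordSupport α = {σ 0})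
    (hSβ : coordSupport β = {σ 1}) (hSγ : coordSupport γ = {σ 2}) (hSδ : coordSupport δ = {σ 3}) :
    ∃ a b c d, a ≠ 0 ∧ b ≠ 0 ∧ c ≠ 0 ∧ d ≠ 0 ∧
      {y : EuclideanSpace ℝ (Fin 4) | ∃ a ∈ ({α, β, γ, δ} : Set (Fin 4 → ℝ)), |y.ofLp| = a ∘ σ} =
        setIII a b c d := by
  refine ⟨α (σ 0), β (σ 1), γ (σ 2), δ (σ 3), ?_, ?_, ?_, ?_, ?_⟩
  any_goals exact mem_coordSupport.mp (by simp [hSα, hSβ, hSγ, hSδ])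
  ext y
  simp [mem_setIII, comp_perm_eq_abs hα, comp_perm_eq_abs hβ, comp_perm_eq_abs hγ,
    comp_perm_eq_abs hδ, apply_eq_zero_of_notMem_coordSupport, hSα, hSβ, hSγ, hSδ]

end Configurations

theorem stmt6 (X : Geometry.SimplicialComplex ℝ (EuclideanSpace ℝ (Fin 4)))
    (hX : IsEquivSphereTriangulation 4 X)
    (hcard : X.vertices.ncard = 8) :
    ∃ (σ : Equiv.Perm (Fin 4)) (a b c d : ℝ), a ≠ 0 ∧ b ≠ 0 ∧ c ≠ 0 ∧ d ≠ 0 ∧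
      ((fun x : EuclideanSpace ℝ (Fin 4) =>
          (WithLp.toLp 2 (fun i => x (σ i)) : EuclideanSpace ℝ (Fin 4))) '' X.vertices = setI a b c d ∨
       (fun x : EuclideanSpace ℝ (Fin 4) =>
          (WithLp.toLp 2 (fun i => x (σ i)) : EuclideanSpace ℝ (Fin 4))) '' X.vertices = setII a b c d ∨
       (fun x : EuclideanSpace ℝ (Fin 4) =>
          (WithLp.toLp 2 (fun i => x (σ i)) : EuclideanSpace ℝ (Fin 4))) '' X.vertices = setIII a b c d) := by
  classical
  have hfin : X.vertices.Finite := Set.finite_of_ncard_ne_zero (by rw [hcard]; norm_num)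
  have hinv := hX.isSignInvariant_vertices
  set A := hfin.toFinset.image (|·.ofLp|)
  have hnonneg : ∀ a ∈ A, 0 ≤ a := by simp [A, abs_nonneg]
  have hcover : ∀ i, ∃ a ∈ A, i ∈ coordSupport a := fun i => by
    obtain ⟨v, hv, hvi⟩ := hX.exists_vertex_apply_ne_zero i
    exact ⟨_, Finset.mem_image_of_mem _ (hfin.mem_toFinset.2 hv), mem_coordSupport.2 (by simpa)⟩
  have hsum : ∑ a ∈ A, 2 ^ #(coordSupport a) = 2 * Fintype.card (Fin 4) := by
    rw [← IsSignInvariant.card_eq_sum (by rwa [hfin.coe_toFinset]),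
      ← Set.ncard_eq_toFinset_card _ hfin, hcard, Fintype.card_fin]
  obtain ⟨hsum4, hsize⟩ := sum_card_eq_of_sum_two_pow_eq hcover hsum
  have hV : X.vertices = {x | |x.ofLp| ∈ (A : Set (Fin 4 → ℝ))} := by
    rw [Finset.coe_image, hfin.coe_toFinset, ← hinv.eq_setOf_abs_mem]
  simp only [hV, image_permute_setOf_abs_mem]
  obtain ⟨σ, ⟨α, β, hA, hSα, hSβ⟩ | ⟨α, β, γ, hA, hSα, hSβ, hSγ⟩ |
      ⟨α, β, γ, δ, hA, hSα, hSβ, hSγ, hSδ⟩⟩ := exists_perm_of_blocks hcover hsum4 hsize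
  all_goals
    simp only [hA, Finset.mem_insert, Finset.mem_singleton, forall_eq_or_imp, forall_eq] at hnonneg
    simp only [hA, Finset.coe_insert, Finset.coe_singleton]
  · obtain ⟨a, b, c, d, ha, hb, hc, hd, h⟩ :=
      exists_eq_setI_of_coordSupport_eq hnonneg.1 hnonneg.2 hSα hSβ
    exact ⟨σ, a, b, c, d, ha, hb, hc, hd, Or.inl h⟩
  · obtain ⟨a, b, c, d, ha, hb, hc, hd, h⟩ :=
      exists_eq_setII_of_coordSupport_eq hnonneg.1 hnonneg.2.1 hnonneg.2.2 hSα hSβ hSγ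
    exact ⟨σ, a, b, c, d, ha, hb, hc, hd, Or.inr (Or.inl h)⟩
  · obtain ⟨a, b, c, d, ha, hb, hc, hd, h⟩ := exists_eq_setIII_of_coordSupport_eq
      hnonneg.1 hnonneg.2.1 hnonneg.2.2.1 hnonneg.2.2.2 hSα hSβ hSγ hSδ
    exact ⟨σ, a, b, c, d, ha, hb, hc, hd, Or.inr (Or.inr h)⟩
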